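/- arXiv:2201.12531 — 2 statements merged into one kernel-verified Lean document; each statement's English description precedes it below -/
import Mathlib

section
/- Let G be a connected bipartite graph with colour classes V and E, let f be a hypertree of G realized by a spanning tree τ. A subset A ⊆ E is tight at f if and only if the restriction τ|_A of τ to the subgraph induced by A is a spanning forest of G|_A, i.e., the components of τ|_A are exactly spanning trees of the components of G|_A. -/
open SimpleGraph

variable {V E : Type*}

/-- The bipartite graph on `V ⊕ E` determined by the incidence relation `r`. -/
def BipGraph (r : V → E → Prop) : SimpleGraph (V ⊕ E) where
  Adj x y := (∃ v e, x = Sum.inl v ∧ y = Sum.inr e ∧ r v e) ∨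
             (∃ v e, x = Sum.inr e ∧ y = Sum.inl v ∧ r v e)
  symm := ⟨by
    rintro x y (⟨v, e, rfl, rfl, h⟩ | ⟨v, e, rfl, rfl, h⟩)
    · exact Or.inr ⟨v, e, rfl, rfl, h⟩
    · exact Or.inl ⟨v, e, rfl, rfl, h⟩⟩
  loopless := ⟨by
    rintro x (⟨v, e, rfl, h, _⟩ | ⟨v, e, rfl, h, _⟩) <;> simp_all⟩

/-- `τ` is a spanning tree of `G`. -/
def IsSpanningTree {α : Type*} (G τ : SimpleGraph α) : Prop :=
  τ ≤ G ∧ τ.Connected ∧ τ.IsAcyclic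

/-- A hypertree of the hypergraph induced by the bipartite graph `BipGraph r`
(with `E` the set of hyperedges): a function realized by a spanning tree. -/
def IsHypertree (r : V → E → Prop) (f : E → ℕ) : Prop :=
  ∃ τ : SimpleGraph (V ⊕ E), IsSpanningTree (BipGraph r) τ ∧
    ∀ e : E, (τ.neighborSet (Sum.inr e)).ncard = f e + 1

/-- The restriction of a graph `H` on `V ⊕ E` (typically a subgraph of `BipGraph r`)
to the hyperedge set `A` together with all `V`-vertices incident (in `G`) to `A`. -/
def BipRestrict (r : V → E → Prop) (H : SimpleGraph (V ⊕ E)) (A : Set E) :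
    SimpleGraph ({v : V // ∃ e ∈ A, r v e} ⊕ A) where
  Adj x y := H.Adj (Sum.elim (fun v => Sum.inl v.1) (fun e => Sum.inr e.1) x)
               (Sum.elim (fun v => Sum.inl v.1) (fun e => Sum.inr e.1) y)
  symm := ⟨fun _ _ h => H.adj_symm h⟩
  loopless := ⟨by
    rintro (v | e) h <;> exact H.irrefl h⟩

/-- `μ(A) = |⋃A| - c(A)`. -/
noncomputable def mu (r : V → E → Prop) (A : Set E) : ℕ :=
  Nat.card {v : V // ∃ e ∈ A, r v e} -
    Nat.card (BipRestrict r (BipGraph r) A).ConnectedComponent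

/-- `A` is tight at `f`. -/
noncomputable def Tight (r : V → E → Prop) (f : E → ℕ) (A : Finset E) : Prop :=
  ∑ e ∈ A, f e = mu r (↑A : Set E)

open Classical in
/-- The function obtained from `f` by decreasing `f e` by one and increasing `f e'` by one. -/
noncomputable def Transfer (f : E → ℕ) (e e' : E) : E → ℕ :=
  fun x => if x = e then f e - 1 else if x = e' then f e' + 1 else f x

/-- The internal inactivity of `f`: the number of internally inactive hyperedges. -/
noncomputable def intInact (r : V → E → Prop) [LT E] (f : E → ℕ) : ℕ :=
  Nat.card {e : E // ∃ e', e' < e ∧ IsHypertree r (Transfer f e e')}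

/-- The external inactivity of `f`: the number of externally inactive hyperedges. -/
noncomputable def extInact (r : V → E → Prop) [LT E] (f : E → ℕ) : ℕ :=
  Nat.card {e : E // ∃ e', e' < e ∧ IsHypertree r (Transfer f e' e)}

/-- The interior polynomial `I_G(x) = ∑_f x^{ῑ(f)}`. -/
noncomputable def interiorPoly (r : V → E → Prop) [Fintype E] [LT E] : Polynomial ℤ :=
  ∑ i ∈ Finset.range (Fintype.card E + 1),
    Polynomial.C ((Nat.card {f : E → ℕ // IsHypertree r f ∧ intInact r f = i} : ℕ) : ℤ) *
      Polynomial.X ^ i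

/-- The exterior polynomial `X_G(y) = ∑_f y^{ε̄(f)}`. -/
noncomputable def exteriorPoly (r : V → E → Prop) [Fintype E] [LT E] : Polynomial ℤ :=
  ∑ i ∈ Finset.range (Fintype.card E + 1),
    Polynomial.C ((Nat.card {f : E → ℕ // IsHypertree r f ∧ extInact r f = i} : ℕ) : ℤ) *
      Polynomial.X ^ i

/-!
A forest has exactly as many components as vertices minus edges. Since `τ` is a tree, `τ|_A`
is a forest; as every `τ`-neighbour of a hyperedge `e ∈ A` lies in `⋃A`, it has
`∑_{e ∈ A} (f e + 1)` edges on `|⋃A| + |A|` vertices, so `|⋃A| = ∑_{e ∈ A} f e + c(τ|_A)`.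
Hence `A` is tight exactly when `τ|_A` has as many components as its supergraph `G|_A`, i.e.
when both have the same components.
-/

namespace SimpleGraph

variable {α : Type*} {G : SimpleGraph α}

theorem ConnectedComponent.card_eq_card_iff_of_le [Finite α] {G' : SimpleGraph α} (h : G ≤ G') :
    Nat.card G.ConnectedComponent = Nat.card G'.ConnectedComponent ↔
      ∀ u v, G'.Reachable u v ↔ G.Reachable u v := by
  have hsurj := ConnectedComponent.surjective_map_ofLE h
  have hbij : Function.Bijective (ConnectedComponent.map (Hom.ofLE h)) ↔
      Nat.card G.ConnectedComponent = Nat.card G'.ConnectedComponent := by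
    rw [Nat.bijective_iff_surjective_and_card, and_iff_right hsurj]
  rw [← hbij, Function.Bijective, and_iff_left hsurj]
  constructor
  · intro hinj u v
    refine ⟨fun huv => ConnectedComponent.exact (hinj ?_), fun huv => huv.mono h⟩
    simpa using ConnectedComponent.sound huv
  · intro hreach C D
    induction C, D using ConnectedComponent.ind₂ with
    | _ u v => simp [hreach]

theorem sum_card_connectedComponent [Finite α] [Fintype G.ConnectedComponent] :
    ∑ C : G.ConnectedComponent, Nat.card C = Nat.card α := by
  rw [← Nat.card_congr (Equiv.sigmaFiberEquiv G.connectedComponentMk), Nat.card_sigma]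
  rfl

theorem card_edgeSet_eq_sum_connectedComponent [Finite α] [Fintype G.ConnectedComponent] :
    Nat.card G.edgeSet = ∑ C : G.ConnectedComponent, Nat.card C.toSimpleGraph.edgeSet := by
  classical
  have := Fintype.ofFinite α
  have hdeg (C : G.ConnectedComponent) (v : C) : C.toSimpleGraph.degree v = G.degree v := by
    convert degree_induce_of_neighborSet_subset fun _ => C.mem_supp_of_adj_mem_supp v.2
      using 2 <;> rfl
  refine Nat.eq_of_mul_eq_mul_left two_pos ?_
  calc 2 * Nat.card G.edgeSet = ∑ v, G.degree v := by
        rw [sum_degrees_eq_twice_card_edges, Nat.card_eq_fintype_card, edgeFinset_card]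
    _ = ∑ C : G.ConnectedComponent, ∑ v : C, C.toSimpleGraph.degree v := by
        simp only [hdeg]
        exact (Fintype.sum_fiberwise G.connectedComponentMk _).symm
    _ = 2 * ∑ C : G.ConnectedComponent, Nat.card C.toSimpleGraph.edgeSet := by
        rw [Finset.mul_sum]
        refine Finset.sum_congr rfl fun C _ => ?_
        rw [sum_degrees_eq_twice_card_edges, Nat.card_eq_fintype_card, edgeFinset_card]

theorem IsAcyclic.card_edgeSet_add_card_connectedComponent [Finite α] (hG : G.IsAcyclic) :
    Nat.card G.edgeSet + Nat.card G.ConnectedComponent = Nat.card α := by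
  classical
  have := Fintype.ofFinite α
  have := Fintype.ofFinite G.ConnectedComponent
  have htree (C : G.ConnectedComponent) : Nat.card C.toSimpleGraph.edgeSet + 1 = Nat.card C := by
    rw [Nat.card_eq_fintype_card, Nat.card_eq_fintype_card, ← edgeFinset_card]
    convert (hG.isTree_connectedComponent C).card_edgeFinset
  rw [card_edgeSet_eq_sum_connectedComponent, Nat.card_eq_fintype_card (α := G.ConnectedComponent),
    ← Finset.card_univ, Finset.card_eq_sum_ones, ← Finset.sum_add_distrib]
  simp only [htree, sum_card_connectedComponent]

theorem card_edgeSet_eq_sum_ncard_neighborSet_inr {β γ : Type*} [Finite β] [Fintype γ]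
    {G : SimpleGraph (β ⊕ γ)} (h : G ≤ completeBipartiteGraph β γ) :
    Nat.card G.edgeSet = ∑ c, (G.neighborSet (Sum.inr c)).ncard := by
  classical
  have := Fintype.ofFinite β
  have hbip : G.IsBipartiteWith ((Finset.univ.map .inl : Finset (β ⊕ γ)) : Set (β ⊕ γ))
      ((Finset.univ.map .inr : Finset (β ⊕ γ)) : Set (β ⊕ γ)) := by
    refine ⟨Finset.disjoint_coe.mpr (Finset.disjoint_map_inl_map_inr _ _), fun v w hvw => ?_⟩
    have := h hvw
    rcases v with _ | _ <;> rcases w with _ | _ <;> simp_all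
  simp only [← Nat.card_coe_set_eq, Nat.card_eq_fintype_card, card_neighborSet_eq_degree]
  rw [← edgeFinset_card, ← isBipartiteWith_sum_degrees_eq_card_edges' hbip, Finset.sum_map]
  rfl

end SimpleGraph

section BipRestrict

variable {r : V → E → Prop}

theorem bipGraph_le_completeBipartiteGraph : BipGraph r ≤ completeBipartiteGraph V E := by
  rintro _ _ (⟨v, e, rfl, rfl, -⟩ | ⟨v, e, rfl, rfl, -⟩) <;> simp

theorem bipRestrict_eq_comap (H : SimpleGraph (V ⊕ E)) (A : Set E) :
    BipRestrict r H A = H.comap (Sum.map Subtype.val Subtype.val) :=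
  rfl

theorem bipRestrict_mono {H H' : SimpleGraph (V ⊕ E)} (h : H ≤ H') (A : Set E) :
    BipRestrict r H A ≤ BipRestrict r H' A :=
  fun _ _ hxy => h hxy

theorem SimpleGraph.IsAcyclic.bipRestrict {H : SimpleGraph (V ⊕ E)} (hH : H.IsAcyclic)
    (A : Set E) : (BipRestrict r H A).IsAcyclic := by
  rw [bipRestrict_eq_comap]
  exact hH.of_comap ((Function.Embedding.subtype _).sumMap (Function.Embedding.subtype _))

theorem bipRestrict_le_completeBipartiteGraph {H : SimpleGraph (V ⊕ E)} (hH : H ≤ BipGraph r)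
    (A : Set E) : BipRestrict r H A ≤ completeBipartiteGraph _ _ := by
  intro x y hxy
  have := bipGraph_le_completeBipartiteGraph (hH hxy)
  rcases x with _ | _ <;> rcases y with _ | _ <;> simp at this ⊢

theorem ncard_neighborSet_bipRestrict_inr {H : SimpleGraph (V ⊕ E)} (hH : H ≤ BipGraph r)
    {A : Set E} (e : A) :
    ((BipRestrict r H A).neighborSet (Sum.inr e)).ncard = (H.neighborSet (Sum.inr e.1)).ncard := by
  rw [bipRestrict_eq_comap]
  refine Set.ncard_preimage_of_injective_subset_range
    (Sum.map_injective.mpr ⟨Subtype.val_injective, Subtype.val_injective⟩) ?_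
  rintro _ hx
  rcases hH hx with ⟨v, e', he, -, -⟩ | ⟨v, e', he, rfl, hve⟩
  · cases he
  · cases he
    exact ⟨Sum.inl ⟨v, e.1, e.2, hve⟩, rfl⟩

theorem card_incident_eq_sum_add_card_connectedComponent [Finite V] {τ : SimpleGraph (V ⊕ E)}
    (hτG : τ ≤ BipGraph r) (hτ : τ.IsAcyclic) {f : E → ℕ} {A : Finset E}
    (hreal : ∀ e ∈ A, (τ.neighborSet (Sum.inr e)).ncard = f e + 1) :
    Nat.card {v : V // ∃ e ∈ (A : Set E), r v e} =
      ∑ e ∈ A, f e + Nat.card (BipRestrict r τ A).ConnectedComponent := by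
  have hforest := (hτ.bipRestrict (r := r) A).card_edgeSet_add_card_connectedComponent
  have hedges : Nat.card (BipRestrict r τ A).edgeSet = ∑ e ∈ A, (f e + 1) := by
    rw [card_edgeSet_eq_sum_ncard_neighborSet_inr (bipRestrict_le_completeBipartiteGraph hτG A),
      ← Finset.sum_coe_sort A]
    exact Finset.sum_congr rfl fun e _ =>
      (ncard_neighborSet_bipRestrict_inr hτG e).trans (hreal e e.2)
  rw [hedges, Finset.sum_add_distrib, Finset.sum_const, smul_eq_mul, mul_one, Nat.card_sum,
    Nat.card_coe_set_eq, Set.ncard_coe_finset] at hforest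
  omega

end BipRestrict

theorem tight_iff_spanning_forest_general {V E : Type*} [Fintype V] (r : V → E → Prop)
    (f : E → ℕ) (τ : SimpleGraph (V ⊕ E))
    (hτ : IsSpanningTree (BipGraph r) τ)
    (hreal : ∀ e : E, (τ.neighborSet (Sum.inr e)).ncard = f e + 1) (A : Finset E) :
    Tight r f A ↔
      ((BipRestrict r τ (↑A : Set E)).IsAcyclic ∧
        ∀ x y, (BipRestrict r (BipGraph r) (↑A : Set E)).Reachable x y ↔
          (BipRestrict r τ (↑A : Set E)).Reachable x y) := by
  obtain ⟨hτG, -, hτacyc⟩ := hτ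
  have hle : BipRestrict r τ A ≤ BipRestrict r (BipGraph r) A := bipRestrict_mono hτG _
  have hcount := card_incident_eq_sum_add_card_connectedComponent hτG hτacyc
    (A := A) fun e _ => hreal e
  have hmono := ConnectedComponent.card_le_card_of_le hle
  rw [Tight, mu, ← ConnectedComponent.card_eq_card_iff_of_le hle,
    and_iff_right (hτacyc.bipRestrict _)]
  omega

/-- `A` is tight at `f` iff the restriction `τ|_A` of a realizing
spanning tree `τ` is a spanning forest of `G|_A` (it is acyclic and its components
span exactly the components of `G|_A`, i.e. it has the same reachability relation). -/
theorem tight_iff_spanning_forest {V E : Type*} [Fintype V] [Fintype E] (r : V → E → Prop)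
    (hconn : (BipGraph r).Connected) (f : E → ℕ) (τ : SimpleGraph (V ⊕ E))
    (hτ : IsSpanningTree (BipGraph r) τ)
    (hreal : ∀ e : E, (τ.neighborSet (Sum.inr e)).ncard = f e + 1) (A : Finset E) :
    Tight r f A ↔
      ((BipRestrict r τ (↑A : Set E)).IsAcyclic ∧
        ∀ x y, (BipRestrict r (BipGraph r) (↑A : Set E)).Reachable x y ↔
          (BipRestrict r τ (↑A : Set E)).Reachable x y) :=
  tight_iff_spanning_forest_general r f τ hτ hreal A
end

section
/- Let G be a connected bipartite graph with colour classes V and E such that G − e is connected for every e ∈ E. Then the coefficient of the linear term of the exterior polynomial X_G(y) equals |V| − 1; that is, the number of hypertrees of G with exactly one externally inactive hyperedge (for any fixed order on E) is |V| − 1. -/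
open SimpleGraph

variable {V E : Type*}

/-!
Hypertrees are the vectors `deg_τ - 1` of hyperedge degrees of spanning trees `τ`. Swapping
edges between two spanning trees shows that they satisfy the exchange axiom: if `h i < f i`,
then `f - 1_i + 1_l` is a hypertree for some `l` with `f l < h l`.

For a set `B` with this property and constant coordinate sum, `e` is externally inactive at `f`
iff some `g ∈ B` agrees with `f` above `e` and exceeds it at `e`. Let `f*` be the maximum of `B`
in the lexicographic order that compares the largest indices first. The `f` whose only
externally inactive hyperedge is `j` are exactly the lexicographic maxima of
`{g ∈ B | g = f* above j, g j = c}` for `c < f* j`. These sets are nonempty because every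
`G - j` is connected, so that some hypertree vanishes at `j`. Hence there are
`∑ j, f* j = |V| - 1` such hypertrees.
-/

namespace SimpleGraph

variable {α : Type*} {G T S K : SimpleGraph α}

theorem IsAcyclic.isTree_of_card_edgeSet [Finite α] (hG : G.IsAcyclic)
    (hcard : Nat.card G.edgeSet + 1 = Nat.card α) : G.IsTree := by
  have : Nonempty α := (Nat.card_pos_iff.mp (by omega)).1
  obtain ⟨F, hGF, -, hF⟩ := connected_top.exists_isTree_le_of_le_of_isAcyclic le_top hG
  have hFcard := (isTree_iff_connected_and_card.mp hF).2
  rw [Nat.card_coe_set_eq] at hcard hFcard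
  have : G.edgeSet = F.edgeSet :=
    Set.eq_of_subset_of_ncard_le (edgeSet_mono hGF) (by omega) (Set.toFinite _)
  rwa [edgeSet_inj.mp this]

theorem edgeSet_deleteEdges_sup_edge {u v a b : α} (hab : a ≠ b) :
    (G.deleteEdges {s(u, v)} ⊔ edge a b).edgeSet = insert s(a, b) (G.edgeSet \ {s(u, v)}) := by
  rw [edgeSet_sup, edgeSet_edge_of_ne hab, edgeSet_deleteEdges, Set.union_singleton]

theorem IsTree.deleteEdges_sup_edge [Finite α] {u v a b : α} (hT : T.IsTree) (huv : T.Adj u v)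
    (hab : ¬(T.deleteEdges {s(u, v)}).Reachable a b) :
    (T.deleteEdges {s(u, v)} ⊔ edge a b).IsTree := by
  have hne : a ≠ b := by rintro rfl; exact hab .rfl
  have hnew : s(a, b) ∉ (T.deleteEdges {s(u, v)}).edgeSet := fun h ↦ hab (Adj.reachable h)
  have hacyc := (hT.isAcyclic.anti (deleteEdges_le _)).sup_edge_of_not_reachable hab
  refine hacyc.isTree_of_card_edgeSet ?_
  rw [← (isTree_iff_connected_and_card.mp hT).2, Nat.card_coe_set_eq, Nat.card_coe_set_eq,
    edgeSet_deleteEdges_sup_edge hne, Set.ncard_insert_of_notMem (by simpa using hnew),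
    Set.ncard_sdiff_singleton_add_one (T.mem_edgeSet.mpr huv)]

theorem ncard_sdiff_edgeSet_deleteEdges_sup_edge_lt [Finite α] {u v a b : α} (huv : T.Adj u v)
    (huvS : ¬S.Adj u v) (hab : S.Adj a b) :
    ((T.deleteEdges {s(u, v)} ⊔ edge a b).edgeSet \ S.edgeSet).ncard <
      (T.edgeSet \ S.edgeSet).ncard := by
  have hedges := T.edgeSet_deleteEdges_sup_edge (u := u) (v := v) hab.ne
  refine Set.ncard_lt_ncard ((Set.ssubset_iff_of_subset ?_).mpr
    ⟨s(u, v), ⟨huv, huvS⟩, fun ⟨h, _⟩ ↦ ?_⟩)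
  · rintro y ⟨hy, hyS⟩
    rw [hedges] at hy
    rcases hy with rfl | ⟨hyT, -⟩
    · exact absurd hab hyS
    · exact ⟨hyT, hyS⟩
  · rw [hedges] at h
    rcases h with h | ⟨-, h⟩
    · exact huvS (by rw [← mem_edgeSet, h]; exact hab)
    · exact h rfl

theorem Reachable.exists_adj_not_reachable {u v : α} (hS : S.Reachable u v)
    (hK : ¬K.Reachable u v) : ∃ a b, S.Adj a b ∧ ¬K.Reachable a b := by
  obtain ⟨p⟩ := hS
  obtain ⟨d, -, hd₁, hd₂⟩ := p.exists_boundary_dart {x | K.Reachable u x} .rfl hK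
  exact ⟨_, _, d.adj, fun h ↦ hd₂ (Reachable.trans hd₁ h)⟩

end SimpleGraph

section Transfer

variable {f : E → ℕ} {i l x : E}

theorem transfer_apply_source : Transfer f i l i = f i - 1 := by
  simp [Transfer]

theorem transfer_apply_target (h : l ≠ i) : Transfer f i l l = f l + 1 := by
  simp [Transfer, h]

theorem transfer_apply_of_ne (hi : x ≠ i) (hl : x ≠ l) : Transfer f i l x = f x := by
  simp [Transfer, hi, hl]

theorem transfer_add_single [DecidableEq E] (hil : i ≠ l) (hi : 0 < f i) :
    Transfer f i l + Pi.single i 1 = f + Pi.single l 1 := by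
  funext x
  rcases eq_or_ne x i with rfl | hxi
  · simp [transfer_apply_source, hil]
    omega
  rcases eq_or_ne x l with rfl | hxl
  · simp [transfer_apply_target hxi, hxi]
  · simp [transfer_apply_of_ne hxi hxl, hxi, hxl]

end Transfer

/-- The exchange axiom for the bases of an integer polymatroid, in its one-sided form. -/
def ExchangeProperty (B : Set (E → ℕ)) : Prop :=
  ∀ f ∈ B, ∀ g ∈ B, ∀ i, g i < f i → ∃ l, f l < g l ∧ Transfer f i l ∈ B

theorem exists_eq_add_single_of_le_of_sum_eq [Fintype E] [DecidableEq E] {g h : E → ℕ}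
    (hle : g ≤ h) (hsum : ∑ x, h x = ∑ x, g x + 1) : ∃ i, h = g + Pi.single i 1 := by
  obtain ⟨i, hi⟩ : ∃ i, g i < h i := by
    by_contra! H
    have : ∑ x, h x ≤ ∑ x, g x := Finset.sum_le_sum fun x _ ↦ H x
    omega
  have hle' : ∀ x ∈ Finset.univ, (g + Pi.single i 1 : E → ℕ) x ≤ h x := by
    intro x _
    rcases eq_or_ne x i with rfl | hxi
    · simpa using hi
    · simpa [Pi.single_eq_of_ne hxi] using hle x
  refine ⟨i, funext fun x ↦
    ((Finset.sum_eq_sum_iff_of_le hle').mp ?_ x (Finset.mem_univ x)).symm⟩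
  simp [Finset.sum_add_distrib, hsum]

noncomputable def hyperedgeDegree (τ : SimpleGraph (V ⊕ E)) (e : E) : ℕ :=
  (τ.neighborSet (Sum.inr e)).ncard

section SpanningTree

variable {r : V → E → Prop} {τ σ : SimpleGraph (V ⊕ E)} [DecidableEq E] [Finite V]
  [Finite E]

theorem hyperedgeDegree_deleteEdges_add_single {i : E} {v : V}
    (h : τ.Adj (Sum.inr i) (Sum.inl v)) :
    hyperedgeDegree (τ.deleteEdges {s(Sum.inr i, Sum.inl v)}) + Pi.single i 1 =
      hyperedgeDegree τ := by
  funext j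
  simp only [Pi.add_apply, hyperedgeDegree]
  rcases eq_or_ne j i with rfl | hji
  · have : (τ.deleteEdges {s(Sum.inr j, Sum.inl v)}).neighborSet (Sum.inr j) =
        τ.neighborSet (Sum.inr j) \ {Sum.inl v} := by
      ext z; simp [and_comm]
    rw [this, Pi.single_eq_same, Set.ncard_sdiff_singleton_add_one (s := τ.neighborSet _) h]
  · have : (τ.deleteEdges {s(Sum.inr i, Sum.inl v)}).neighborSet (Sum.inr j) =
        τ.neighborSet (Sum.inr j) := by
      ext z; simp [hji]
    rw [this, Pi.single_eq_of_ne hji, add_zero]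

theorem hyperedgeDegree_sup_edge {w : V} {e : E}
    (h : ¬τ.Adj (Sum.inl w) (Sum.inr e)) :
    hyperedgeDegree (τ ⊔ edge (Sum.inl w) (Sum.inr e)) = hyperedgeDegree τ + Pi.single e 1 := by
  funext j
  simp only [Pi.add_apply, hyperedgeDegree]
  rcases eq_or_ne j e with rfl | hje
  · have : (τ ⊔ edge (Sum.inl w) (Sum.inr j)).neighborSet (Sum.inr j) =
        insert (Sum.inl w) (τ.neighborSet (Sum.inr j)) := by
      ext (z | z) <;> simp [edge_adj, eq_comm, or_comm]
    rw [this, Pi.single_eq_same, Set.ncard_insert_of_notMem (fun h' ↦ h h'.symm)]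
  · have : (τ ⊔ edge (Sum.inl w) (Sum.inr e)).neighborSet (Sum.inr j) =
        τ.neighborSet (Sum.inr j) := by
      ext z; simp [edge_adj, hje]
    rw [this, Pi.single_eq_of_ne hje, add_zero]

theorem IsSpanningTree.exists_swap (hτ : IsSpanningTree (BipGraph r) τ)
    (hσ : IsSpanningTree (BipGraph r) σ) {i : E}
    (hi : hyperedgeDegree σ i < hyperedgeDegree τ i) :
    ∃ e ρ, IsSpanningTree (BipGraph r) ρ ∧
      (ρ.edgeSet \ σ.edgeSet).ncard < (τ.edgeSet \ σ.edgeSet).ncard ∧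
      hyperedgeDegree ρ + Pi.single i 1 = hyperedgeDegree τ + Pi.single e 1 := by
  obtain ⟨x, hxτ, hxσ⟩ : ∃ x, τ.Adj (Sum.inr i) x ∧ ¬σ.Adj (Sum.inr i) x := by
    by_contra! h
    exact hi.not_ge (Set.ncard_le_ncard (fun x hx ↦ h x hx) (Set.toFinite _))
  obtain ⟨_, _, ⟨⟩, -, -⟩ | ⟨v, _, ⟨⟩, rfl, -⟩ := hτ.1 hxτ
  -- replace the edge `i v ∉ σ` of `τ` by an edge of `σ` across the cut of `τ - i v`
  set K := τ.deleteEdges {s(Sum.inr i, Sum.inl v)}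
  have hbridge : ¬K.Reachable (Sum.inr i) (Sum.inl v) :=
    isAcyclic_iff_forall_adj_isBridge.mp hτ.2.2 hxτ
  obtain ⟨a, b, hab, hKab⟩ := (hσ.2.1.preconnected _ _).exists_adj_not_reachable hbridge
  obtain ⟨w, e, hσwe, hKwe⟩ :
      ∃ w e, σ.Adj (Sum.inl w) (Sum.inr e) ∧ ¬K.Reachable (Sum.inl w) (Sum.inr e) := by
    rcases hσ.1 hab with ⟨w, e, rfl, rfl, -⟩ | ⟨w, e, rfl, rfl, -⟩
    · exact ⟨w, e, hab, hKab⟩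
    · exact ⟨w, e, hab.symm, fun h ↦ hKab h.symm⟩
  have htree := IsTree.deleteEdges_sup_edge ⟨hτ.2.1, hτ.2.2⟩ hxτ hKwe
  refine ⟨e, K ⊔ edge (Sum.inl w) (Sum.inr e),
    ⟨sup_le ((deleteEdges_le _).trans hτ.1) ((edge_le_iff _).mpr (.inr (hσ.1 hσwe))),
      htree.connected, htree.isAcyclic⟩,
    ncard_sdiff_edgeSet_deleteEdges_sup_edge_lt hxτ hxσ hσwe, ?_⟩
  rw [hyperedgeDegree_sup_edge (fun h ↦ hKwe h.reachable), add_right_comm,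
    hyperedgeDegree_deleteEdges_add_single hxτ]

theorem IsSpanningTree.exists_exchange (hτ : IsSpanningTree (BipGraph r) τ)
    (hσ : IsSpanningTree (BipGraph r) σ) {i : E}
    (hi : hyperedgeDegree σ i < hyperedgeDegree τ i) :
    ∃ l, hyperedgeDegree τ l < hyperedgeDegree σ l ∧
      ∃ ρ, IsSpanningTree (BipGraph r) ρ ∧
      hyperedgeDegree ρ + Pi.single i 1 = hyperedgeDegree τ + Pi.single l 1 := by
  induction hn : (τ.edgeSet \ σ.edgeSet).ncard using Nat.strong_induction_on
    generalizing τ i with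
  | _ n ih =>
  obtain ⟨e, ρ₀, hρ₀, hlt, hρ₀τ⟩ := hτ.exists_swap hσ hi
  by_cases he : hyperedgeDegree τ e < hyperedgeDegree σ e
  · exact ⟨e, he, ρ₀, hρ₀, hρ₀τ⟩
  have hρ₀e : hyperedgeDegree σ e < hyperedgeDegree ρ₀ e := by
    have := congrFun hρ₀τ e
    rcases eq_or_ne e i with rfl | hei
    · simp only [Pi.add_apply, Pi.single_eq_same] at this; omega
    · simp only [Pi.add_apply, Pi.single_eq_same, Pi.single_eq_of_ne hei] at this; omega
  obtain ⟨l, hl, ρ, hρ, hρρ₀⟩ := ih _ (hn ▸ hlt) hρ₀ hρ₀e rfl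
  refine ⟨l, ?_, ρ, hρ, funext fun x ↦ ?_⟩
  · have hle : l ≠ e := by rintro rfl; omega
    have h := congrFun hρ₀τ l
    simp only [Pi.add_apply, Pi.single_eq_of_ne hle, add_zero] at h
    rcases eq_or_ne l i with rfl | hli
    · rw [Pi.single_eq_same] at h; omega
    · rw [Pi.single_eq_of_ne hli] at h; omega
  · have h₁ := congrFun hρ₀τ x
    have h₂ := congrFun hρρ₀ x
    simp only [Pi.add_apply] at h₁ h₂ ⊢
    omega

end SpanningTree

section Hypertree

variable {r : V → E → Prop}

theorem isHypertree_iff {f : E → ℕ} :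
    IsHypertree r f ↔
      ∃ τ, IsSpanningTree (BipGraph r) τ ∧ hyperedgeDegree τ = f + 1 := by
  simp only [IsHypertree, hyperedgeDegree, funext_iff, Pi.add_apply, Pi.one_apply]

theorem exchangeProperty_isHypertree [Finite V] [Finite E] :
    ExchangeProperty {f | IsHypertree r f} := by
  classical
  intro f hf g hg i hi
  obtain ⟨τ, hτ, hτf⟩ := isHypertree_iff.mp hf
  obtain ⟨σ, hσ, hσg⟩ := isHypertree_iff.mp hg
  obtain ⟨l, hl, ρ, hρ, hρτ⟩ := hτ.exists_exchange hσ (i := i) (by simp [hτf, hσg, hi])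
  replace hl : f l < g l := by simpa [hτf, hσg] using hl
  refine ⟨l, hl, isHypertree_iff.mpr ⟨ρ, hρ, add_right_cancel (b := Pi.single i 1) ?_⟩⟩
  rw [hρτ, hτf, add_right_comm (Transfer f i l),
    transfer_add_single (by rintro rfl; omega) (by omega), add_right_comm]

theorem finite_setOf_isHypertree [Finite V] [Finite E] :
    {f : E → ℕ | IsHypertree r f}.Finite := by
  classical
  have := Fintype.ofFinite E
  refine (Set.finite_Iic fun _ ↦ Nat.card (V ⊕ E)).subset fun f hf e ↦ ?_
  obtain ⟨τ, -, hτ⟩ := hf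
  have := Set.ncard_le_card (τ.neighborSet (Sum.inr e))
  simp only [hτ] at this
  exact (Nat.le_succ _).trans this

theorem IsHypertree.sum_add_one [Fintype V] [Fintype E] {f : E → ℕ} (hf : IsHypertree r f) :
    ∑ e, f e + 1 = Fintype.card V := by
  classical
  obtain ⟨τ, ⟨hle, hconn, hacyc⟩, hτ⟩ := hf
  have hdeg := isBipartiteWith_sum_degrees_eq_card_edges' (G := τ)
    (s := Finset.univ.map .inl) (t := Finset.univ.map .inr)
    ⟨by simp [Set.disjoint_left], fun x y hxy ↦ by
      rcases hle hxy with ⟨v, e, rfl, rfl, -⟩ | ⟨v, e, rfl, rfl, -⟩ <;> simp⟩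
  have hcard := IsTree.card_edgeFinset ⟨hconn, hacyc⟩
  simp only [Finset.sum_map, ← card_neighborSet_eq_degree, ← Nat.card_eq_fintype_card,
    Nat.card_coe_set_eq] at hdeg
  simp only [Function.Embedding.inr_apply, hτ, Finset.sum_add_distrib, Finset.sum_const,
    Finset.card_univ, smul_eq_mul, mul_one] at hdeg
  rw [Fintype.card_sum] at hcard
  omega

theorem IsSpanningTree.isHypertree [Finite V] [Finite E] [Nontrivial (V ⊕ E)]
    {τ : SimpleGraph (V ⊕ E)} (hτ : IsSpanningTree (BipGraph r) τ) :
    IsHypertree r (hyperedgeDegree τ - 1) := by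
  refine ⟨τ, hτ, fun e ↦ ?_⟩
  obtain ⟨x, hx⟩ := exists_ne (Sum.inr e : V ⊕ E)
  have := (Set.ncard_pos (Set.toFinite _)).mpr
    ((hτ.2.1.preconnected _ x).nonempty_neighborSet_left hx.symm)
  simp only [Pi.sub_apply, Pi.one_apply, hyperedgeDegree]
  omega

theorem exists_isHypertree_apply_eq_zero [Finite V] [Finite E]
    (hconn : (BipGraph r).Connected) {e : E}
    (hdel : ((BipGraph r).induce {x | x ≠ Sum.inr e}).Connected) :
    ∃ f, IsHypertree r f ∧ f e = 0 := by
  obtain ⟨⟨x, hx⟩⟩ := hdel.nonempty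
  obtain ⟨y, hy⟩ := (hconn.preconnected (Sum.inr e) x).nonempty_neighborSet_left (Ne.symm hx)
  obtain ⟨_, _, ⟨⟩, -, -⟩ | ⟨v, _, ⟨⟩, rfl, hr⟩ := hy
  -- every spanning tree of `H` has `e` as a leaf
  set H := ((BipGraph r).induce {x | x ≠ Sum.inr e}).map (Function.Embedding.subtype _) ⊔
    edge (Sum.inl v) (Sum.inr e)
  have hHG : H ≤ BipGraph r :=
    sup_le (map_comap_le _ _) ((edge_le_iff _).mpr (.inr (.inl ⟨v, e, rfl, rfl, hr⟩)))
  have hHe : H.neighborSet (Sum.inr e) ⊆ {Sum.inl v} := by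
    intro z hz
    simp only [H, mem_neighborSet, sup_adj, map_adj, edge_adj] at hz
    rcases hz with ⟨a, -, -, ha, -⟩ | ⟨⟨⟨⟩, -⟩ | ⟨-, rfl⟩, -⟩
    · exact absurd ha a.2
    · rfl
  have hH : H.Connected := by
    refine (connected_iff_exists_forall_reachable _).2 ⟨Sum.inl v, fun z ↦ ?_⟩
    by_cases hz : z = Sum.inr e
    · subst hz
      exact Adj.reachable (by simp [H, edge_adj])
    · exact ((hdel.preconnected ⟨Sum.inl v, Sum.inl_ne_inr⟩ ⟨z, hz⟩).map
        (Embedding.map _ _).toHom).mono le_sup_left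
  obtain ⟨τ, hτH, hτ⟩ := hH.exists_isTree_le
  have : Nontrivial (V ⊕ E) := ⟨⟨Sum.inl v, Sum.inr e, Sum.inl_ne_inr⟩⟩
  refine ⟨_, IsSpanningTree.isHypertree ⟨hτH.trans hHG, hτ.connected, hτ.isAcyclic⟩, ?_⟩
  have := Set.ncard_le_ncard
    ((fun _ h ↦ hHe (hτH h)) : τ.neighborSet (Sum.inr e) ⊆ {Sum.inl v})
  rw [Set.ncard_singleton] at this
  simp only [Pi.sub_apply, Pi.one_apply, hyperedgeDegree]
  omega

theorem exists_isHypertree [Finite V] [Finite E] (hconn : (BipGraph r).Connected)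
    (hdel : ∀ e : E, ((BipGraph r).induce {x | x ≠ Sum.inr e}).Connected) :
    ∃ f, IsHypertree r f := by
  cases isEmpty_or_nonempty E with
  | inl =>
    obtain ⟨τ, hle, hτ⟩ := hconn.exists_isTree_le
    exact ⟨isEmptyElim, τ, ⟨hle, hτ.connected, hτ.isAcyclic⟩, isEmptyElim⟩
  | inr h =>
    obtain ⟨f, hf, -⟩ := exists_isHypertree_apply_eq_zero hconn (hdel h.some)
    exact ⟨f, hf⟩

end Hypertree

section LexDefects

variable [LinearOrder E]

/-- The lexicographic order on `E → ℕ` in which larger indices are more significant. -/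
abbrev topLex (f : E → ℕ) : Lex (Eᵒᵈ → ℕ) := toLex f

theorem topLex_lt_iff {f g : E → ℕ} :
    topLex f < topLex g ↔ ∃ i, (∀ j, i < j → f j = g j) ∧ f i < g i := Iff.rfl

theorem apply_le_of_topLex_le [Finite E] {f g : E → ℕ} {j : E} (h : topLex g ≤ topLex f)
    (hj : ∀ s, j < s → g s = f s) : g j ≤ f j := by
  by_contra! hlt
  exact h.not_gt (topLex_lt_iff.mpr ⟨j, fun s hs ↦ (hj s hs).symm, hlt⟩)

/-- For hypertrees these are the externally inactive hyperedges
(`transfer_mem_iff_mem_lexDefects`). -/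
def lexDefects (B : Set (E → ℕ)) (f : E → ℕ) : Set E :=
  {t | ∃ g ∈ B, f t < g t ∧ ∀ s, t < s → g s = f s}

variable {B : Set (E → ℕ)} {f g : E → ℕ}

theorem exists_mem_lexDefects_of_topLex_lt (hg : g ∈ B) (h : topLex f < topLex g) :
    ∃ i ∈ lexDefects B f, f i < g i := by
  obtain ⟨i, hagree, hlt⟩ := topLex_lt_iff.mp h
  exact ⟨i, ⟨g, hg, hlt, fun s hs ↦ (hagree s hs).symm⟩, hlt⟩

theorem exists_le_add_single_of_mem_lexDefects [Fintype E] (hB : B.Finite)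
    (hexch : ExchangeProperty B) (hf : f ∈ B) {e : E} (he : e ∈ lexDefects B f) :
    ∃ g ∈ B, f e < g e ∧ (∀ s, e < s → g s = f s) ∧ g ≤ f + Pi.single e 1 := by
  classical
  -- take the witness closest to `f`; an exchange would otherwise bring it closer
  obtain ⟨g, ⟨hgB, hge, hgs⟩, hmin⟩ := Set.exists_min_image
    {g ∈ B | f e < g e ∧ ∀ s, e < s → g s = f s} (fun g ↦ ∑ x, (g x - f x))
    (hB.subset fun _ h ↦ h.1) he
  refine ⟨g, hgB, hge, hgs, fun x ↦ ?_⟩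
  by_contra! hx
  have hfx : f x < g x := (Nat.le_add_right _ _).trans_lt hx
  obtain ⟨l, hl, hmem⟩ := hexch g hgB f hf x hfx
  have hlx : l ≠ x := by rintro rfl; omega
  have hle : l ≠ e := by rintro rfl; omega
  have hlt : ∑ y, (Transfer g x l y - f y) < ∑ y, (g y - f y) := by
    refine Finset.sum_lt_sum (fun y _ ↦ ?_) ⟨x, Finset.mem_univ _, ?_⟩
    · rcases eq_or_ne y x with rfl | hyx
      · rw [transfer_apply_source]; omega
      rcases eq_or_ne y l with rfl | hyl
      · rw [transfer_apply_target hyx]; omega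
      · rw [transfer_apply_of_ne hyx hyl]
    · rw [transfer_apply_source]; omega
  refine (hmin _ ⟨hmem, ?_, fun s hs ↦ ?_⟩).not_gt hlt
  · rcases eq_or_ne e x with rfl | hex
    · simp only [Pi.add_apply, Pi.single_eq_same] at hx
      rw [transfer_apply_source]; omega
    · rwa [transfer_apply_of_ne hex (Ne.symm hle)]
  · have := hgs s hs
    rw [transfer_apply_of_ne (by rintro rfl; omega) (by rintro rfl; omega), this]

theorem transfer_mem_iff_mem_lexDefects [Fintype E] {m : ℕ} (hB : B.Finite)
    (hsum : ∀ g ∈ B, ∑ x, g x = m) (hexch : ExchangeProperty B) (hf : f ∈ B) {e : E} :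
    (∃ e' < e, Transfer f e' e ∈ B) ↔ e ∈ lexDefects B f := by
  classical
  refine ⟨fun ⟨e', he', hmem⟩ ↦ ⟨_, hmem, ?_, fun s hs ↦ ?_⟩, fun he ↦ ?_⟩
  · rw [transfer_apply_target he'.ne']
    omega
  · exact transfer_apply_of_ne (he'.trans hs).ne' hs.ne'
  obtain ⟨g, hgB, hge, hgs, hle⟩ := exists_le_add_single_of_mem_lexDefects hB hexch hf he
  obtain ⟨i, hi⟩ := exists_eq_add_single_of_le_of_sum_eq hle
    (by simp [Finset.sum_add_distrib, hsum f hf, hsum g hgB])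
  have hie : i ≠ e := by
    rintro rfl
    have := congrFun hi i
    simp only [Pi.add_apply, Pi.single_eq_same] at this
    omega
  have hfi := congrFun hi i
  simp only [Pi.add_apply, Pi.single_eq_of_ne hie, Pi.single_eq_same, add_zero] at hfi
  refine ⟨i, lt_of_le_of_ne (not_lt.mp fun h ↦ ?_) hie, ?_⟩
  · have := hgs i h
    omega
  · convert hgB using 1
    exact add_right_cancel ((transfer_add_single hie (by omega)).trans hi)

end LexDefects

section Count

variable [LinearOrder E] [Finite E] {B : Set (E → ℕ)} {f g fstar : E → ℕ} {j : E}

theorem exists_mem_eq_above_apply_eq (hexch : ExchangeProperty B)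
    (hzero : ∀ j, ∃ g ∈ B, g j = 0) (hfstar : fstar ∈ B)
    (hmax : ∀ g ∈ B, topLex g ≤ topLex fstar) {c : ℕ} (hc : c ≤ fstar j) :
    ∃ g ∈ B, (∀ s, j < s → g s = fstar s) ∧ g j = c := by
  induction hn : fstar j - c generalizing c with
  | zero => exact ⟨fstar, hfstar, fun _ _ ↦ rfl, by omega⟩
  | succ n ih =>
    obtain ⟨g, hg, hgs, hgj⟩ := ih (c := c + 1) (by omega) (by omega)
    obtain ⟨h, hh, hhj⟩ := hzero j
    obtain ⟨l, hl, hmem⟩ := hexch g hg h hh j (by omega)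
    have hlj : l ≠ j := by rintro rfl; omega
    rcases hlj.lt_or_gt with hlj | hjl
    · refine ⟨_, hmem, fun s hs ↦ ?_, ?_⟩
      · rw [transfer_apply_of_ne hs.ne' (hlj.trans hs).ne', hgs s hs]
      · rw [transfer_apply_source]; omega
    · -- moving a unit up to `l > j` would beat `fstar`
      have := apply_le_of_topLex_le (hmax _ hmem) (j := l) fun s hs ↦ by
        rw [transfer_apply_of_ne (hjl.trans hs).ne' hs.ne', hgs s (hjl.trans hs)]
      rw [transfer_apply_target hlj, hgs l hjl] at this
      omega

theorem eq_above_and_lt_of_lexDefects_eq_singleton (hfstar : fstar ∈ B)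
    (hmax : ∀ g ∈ B, topLex g ≤ topLex fstar) (hf : f ∈ B) (hD : lexDefects B f = {j}) :
    (∀ s, j < s → f s = fstar s) ∧ f j < fstar j := by
  have hagree : ∀ s, j < s → f s = fstar s := by
    intro s
    induction s using WellFoundedGT.induction with
    | _ s ih =>
    intro hjs
    have hle := apply_le_of_topLex_le (hmax f hf) fun t ht ↦ ih t ht (hjs.trans ht)
    by_contra hne
    have : s ∈ lexDefects B f :=
      ⟨fstar, hfstar, lt_of_le_of_ne hle hne, fun t ht ↦ (ih t ht (hjs.trans ht)).symm⟩
    rw [hD] at this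
    exact hjs.ne' this
  obtain ⟨g, hg, hfg, hgs⟩ : j ∈ lexDefects B f := hD ▸ rfl
  exact ⟨hagree, hfg.trans_le <|
    apply_le_of_topLex_le (hmax g hg) fun s hs ↦ (hgs s hs).trans (hagree s hs)⟩

theorem eq_of_lexDefects_eq_singleton (hf : f ∈ B) (hg : g ∈ B)
    (hDf : lexDefects B f = {j}) (hDg : lexDefects B g = {j}) (hfg : f j = g j) : f = g := by
  have hnot_lt : ∀ {f g}, g ∈ B → lexDefects B f = {j} → f j = g j →
      ¬topLex f < topLex g := by
    intro f g hg hDf hfg hlt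
    obtain ⟨i, hi, hlt⟩ := exists_mem_lexDefects_of_topLex_lt hg hlt
    rw [hDf, Set.mem_singleton_iff] at hi
    subst hi
    omega
  by_contra hne
  exact (toLex.injective.ne hne : topLex f ≠ topLex g).lt_or_gt.elim
    (hnot_lt hg hDf hfg) (hnot_lt hf hDg hfg.symm)

theorem exists_lexDefects_eq_singleton (hB : B.Finite) (hexch : ExchangeProperty B)
    (hzero : ∀ j, ∃ g ∈ B, g j = 0) (hfstar : fstar ∈ B)
    (hmax : ∀ g ∈ B, topLex g ≤ topLex fstar) {c : ℕ} (hc : c < fstar j) :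
    ∃ f ∈ B, lexDefects B f = {j} ∧ f j = c := by
  obtain ⟨F, ⟨hFB, hFs, hFj⟩, hFmax⟩ := Set.exists_max_image
    {g ∈ B | (∀ s, j < s → g s = fstar s) ∧ g j = c} topLex (hB.subset fun _ h ↦ h.1)
    (exists_mem_eq_above_apply_eq hexch hzero hfstar hmax hc.le)
  refine ⟨F, hFB, Set.eq_singleton_iff_unique_mem.mpr
    ⟨⟨fstar, hfstar, hFj ▸ hc, fun s hs ↦ (hFs s hs).symm⟩, ?_⟩, hFj⟩
  rintro t ⟨g, hg, hlt, hgs⟩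
  rcases lt_trichotomy t j with htj | rfl | hjt
  · refine absurd (hFmax g ⟨hg, fun s hs ↦ (hgs s (htj.trans hs)).trans (hFs s hs),
      (hgs j htj).trans hFj⟩) (not_le.mpr ?_)
    exact topLex_lt_iff.mpr ⟨t, fun s hs ↦ (hgs s hs).symm, hlt⟩
  · rfl
  · have := apply_le_of_topLex_le (hmax g hg) fun s hs ↦ (hgs s hs).trans (hFs s (hjt.trans hs))
    rw [hFs t hjt] at hlt
    omega

theorem ncard_setOf_lexDefects_eq_singleton (hB : B.Finite) (hexch : ExchangeProperty B)
    (hzero : ∀ j, ∃ g ∈ B, g j = 0) (hfstar : fstar ∈ B)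
    (hmax : ∀ g ∈ B, topLex g ≤ topLex fstar) :
    {f ∈ B | lexDefects B f = {j}}.ncard = fstar j := by
  have himage : (fun f ↦ f j) '' {f ∈ B | lexDefects B f = {j}} = Set.Iio (fstar j) := by
    ext c
    constructor
    · rintro ⟨f, ⟨hf, hD⟩, rfl⟩
      exact (eq_above_and_lt_of_lexDefects_eq_singleton hfstar hmax hf hD).2
    · intro hc
      obtain ⟨f, hf, hD, hfj⟩ := exists_lexDefects_eq_singleton hB hexch hzero hfstar hmax hc
      exact ⟨f, ⟨hf, hD⟩, hfj⟩
  have hinj : Set.InjOn (fun f ↦ f j) {f ∈ B | lexDefects B f = {j}} :=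
    fun f hf g hg ↦ eq_of_lexDefects_eq_singleton hf.1 hg.1 hf.2 hg.2
  rw [← hinj.ncard_image, himage, Set.ncard_Iio_nat]

theorem ncard_setOf_ncard_lexDefects_eq_one [Fintype E] {m : ℕ} (hB : B.Finite)
    (hBne : B.Nonempty) (hsum : ∀ f ∈ B, ∑ x, f x = m) (hexch : ExchangeProperty B)
    (hzero : ∀ j, ∃ g ∈ B, g j = 0) :
    {f ∈ B | (lexDefects B f).ncard = 1}.ncard = m := by
  obtain ⟨fstar, hfstar, hmax⟩ := Set.exists_max_image B topLex hB hBne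
  have hunion :
      {f ∈ B | (lexDefects B f).ncard = 1} = ⋃ j, {f ∈ B | lexDefects B f = {j}} := by
    ext f
    simp [Set.ncard_eq_one]
  rw [hunion, Set.ncard_iUnion_of_finite (fun _ ↦ hB.subset fun _ h ↦ h.1),
    finsum_eq_sum_of_fintype, ← hsum fstar hfstar]
  · exact Finset.sum_congr rfl fun j _ ↦
      ncard_setOf_lexDefects_eq_singleton hB hexch hzero hfstar hmax
  · intro i j hij
    exact Set.disjoint_left.mpr fun f ⟨_, hi⟩ ⟨_, hj⟩ ↦
      hij (Set.singleton_eq_singleton_iff.mp (hi.symm.trans hj))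

end Count

theorem coeff_exteriorPoly [Fintype E] [LinearOrder E] (r : V → E → Prop) (i : ℕ) :
    (exteriorPoly r).coeff i =
      Nat.card {f : E → ℕ // IsHypertree r f ∧ extInact r f = i} := by
  simp only [exteriorPoly, Polynomial.finsetSum_coeff, Polynomial.coeff_C_mul_X_pow,
    Finset.sum_ite_eq, Finset.mem_range]
  split_ifs with hi
  · rfl
  · have : IsEmpty {f : E → ℕ // IsHypertree r f ∧ extInact r f = i} := by
      refine ⟨fun f ↦ hi ?_⟩
      have hcard :=
        Finite.card_subtype_le fun e ↦ ∃ e', e' < e ∧ IsHypertree r (Transfer f.1 e' e)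
      have hf : extInact r f.1 = i := f.2.2
      rw [Nat.card_eq_fintype_card (α := E)] at hcard
      unfold extInact at hf
      omega
    simp

section Main

variable [Fintype V] [Fintype E] [LinearOrder E] {r : V → E → Prop}

theorem extInact_eq_ncard_lexDefects {f : E → ℕ} (hf : IsHypertree r f) :
    extInact r f = (lexDefects {g | IsHypertree r g} f).ncard := by
  have hsum : ∀ g ∈ {g | IsHypertree r g}, ∑ e, g e = ∑ e, f e := fun g hg ↦ by
    have := hg.sum_add_one
    have := hf.sum_add_one
    omega
  rw [extInact, ← Nat.card_coe_set_eq]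
  exact Nat.card_congr <| Equiv.subtypeEquivRight fun e ↦
    transfer_mem_iff_mem_lexDefects finite_setOf_isHypertree hsum exchangeProperty_isHypertree hf

theorem card_isHypertree_extInact_eq_one (hconn : (BipGraph r).Connected)
    (hdel : ∀ e : E, ((BipGraph r).induce {x | x ≠ Sum.inr e}).Connected) :
    Nat.card {f : E → ℕ // IsHypertree r f ∧ extInact r f = 1} = Fintype.card V - 1 := by
  have hsum : ∀ f ∈ {f | IsHypertree r f}, ∑ e, f e = Fintype.card V - 1 := fun f hf ↦ by
    have := hf.sum_add_one
    omega
  rw [← ncard_setOf_ncard_lexDefects_eq_one finite_setOf_isHypertree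
    (exists_isHypertree hconn hdel) hsum exchangeProperty_isHypertree
    fun e ↦ exists_isHypertree_apply_eq_zero hconn (hdel e), ← Nat.card_coe_set_eq]
  exact Nat.card_congr <| Equiv.subtypeEquivRight fun f ↦
    and_congr_right fun hf ↦ by rw [extInact_eq_ncard_lexDefects hf]

end Main

/-- if `G - e` is connected for every `e ∈ E`, then the coefficient of the
linear term of the exterior polynomial is `|V| - 1`. -/
theorem exteriorPoly_linear_coeff {V E : Type*} [Fintype V] [Fintype E] [LinearOrder E]
    (r : V → E → Prop) (hconn : (BipGraph r).Connected)
    (hdel : ∀ e : E, ((BipGraph r).induce {x | x ≠ Sum.inr e}).Connected) :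
    (exteriorPoly r).coeff 1 = (Fintype.card V : ℤ) - 1 := by
  obtain ⟨f, hf⟩ := exists_isHypertree hconn hdel
  have hV := hf.sum_add_one
  rw [coeff_exteriorPoly, card_isHypertree_extInact_eq_one hconn hdel]
  omega
end
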